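/- arXiv:2512.09590 — 2 statements merged into one kernel-verified Lean document; each statement's English description precedes it below -/
import Mathlib

section
/- Let K : ℝ_+ → ℝ_+ be a nonnegative kernel satisfying 0 ≤ K(t) ≤ C e^{bt} t^{a-1} for some constants a, b, C > 0. Then for every n ≥ 1, the n-fold convolution power K^{*n} satisfies (𝟏 * K^{*n})(t) ≤ C^n e^{bt} Γ(a)^n t^{an} / Γ(an+1), where 𝟏 is the constant function 1 and (f*g)(t) = ∫_0^t f(t-s)g(s)ds. -/
/-!
Bounds of the form `A e^{bs} s^{p-1}` are stable under convolution: by the Beta integral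
`∫₀ᵗ s^{p-1} (t-s)^{q-1} ds = B(p,q) t^{p+q-1}`, and since `e^{b(t-s)} e^{bs} = e^{bt}`, the
convolution of two such bounds is `A B B(p,q) e^{bt} t^{p+q-1}`. Induction on `n` gives
`K^{*n}(t) ≤ (C Γ(a))^n e^{bt} t^{an-1} / Γ(an)`, and one more convolution, with
`𝟏 ≤ e^{bt} t^{1-1}` (as `b ≥ 0`), gives the claim because `B(an, 1) = Γ(an) / Γ(an+1)`.
-/

open MeasureTheory Set Real ProbabilityTheory

/-- The `n`-fold convolution power of a kernel `K`:
`K^{*1} = K`, `K^{*(k+1)}(t) = ∫_0^t K(t-s) K^{*k}(s) ds`. -/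
noncomputable def convPow (K : ℝ → ℝ) : ℕ → ℝ → ℝ
  | 0 => K
  | n + 1 => fun t => ∫ s in Ioc (0 : ℝ) t, K (t - s) * convPow K n s

theorem setIntegral_rpow_mul_sub_rpow {p q t : ℝ} (hp : 0 < p) (hq : 0 < q) (ht : 0 < t) :
    ∫ s in Ioc 0 t, s ^ (p - 1) * (t - s) ^ (q - 1) = beta p q * t ^ (p + q - 1) := by
  have hcomplex := Complex.betaIntegral_scaled p q ht
  rw [← intervalIntegral.integral_of_le ht.le, beta_eq_betaIntegralReal p q hp hq]
  have hreal : ∫ s in 0..t, (s : ℂ) ^ ((p : ℂ) - 1) * ((t : ℂ) - s) ^ ((q : ℂ) - 1) =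
      ((∫ s in 0..t, s ^ (p - 1) * (t - s) ^ (q - 1) : ℝ) : ℂ) := by
    rw [← intervalIntegral.integral_ofReal]
    refine intervalIntegral.integral_congr fun s hs => ?_
    rw [uIcc_of_le ht.le] at hs
    push_cast
    rw [Complex.ofReal_cpow hs.1, Complex.ofReal_cpow (sub_nonneg.2 hs.2)]
    push_cast; rfl
  have ht' : (t : ℂ) ^ ((p : ℂ) + q - 1) = ((t ^ (p + q - 1) : ℝ) : ℂ) := by
    rw [Complex.ofReal_cpow ht.le]; push_cast; rfl
  rw [hreal, ht'] at hcomplex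
  rw [← Complex.ofReal_re (∫ s in 0..t, _), hcomplex, Complex.re_ofReal_mul, mul_comm]

theorem integrableOn_rpow_mul_sub_rpow {p q t : ℝ} (hp : 0 < p) (hq : 0 < q) (ht : 0 < t) :
    IntegrableOn (fun s => s ^ (p - 1) * (t - s) ^ (q - 1)) (Ioc 0 t) :=
  -- a non-integrable function has Bochner integral `0`, and this one integrates to a positive value
  .of_integral_ne_zero <| by
    rw [setIntegral_rpow_mul_sub_rpow hp hq ht]
    exact (mul_pos (beta_pos hp hq) (rpow_pos_of_pos ht _)).ne'

theorem setIntegral_mul_le_of_le_exp_mul_rpow {f g : ℝ → ℝ} {A B b p q t : ℝ}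
    (hp : 0 < p) (hq : 0 < q) (ht : 0 < t)
    (hf0 : ∀ s ∈ Ioo 0 t, 0 ≤ f s) (hg0 : ∀ s ∈ Ioo 0 t, 0 ≤ g s)
    (hf : ∀ s ∈ Ioo 0 t, f s ≤ A * exp (b * s) * s ^ (p - 1))
    (hg : ∀ s ∈ Ioo 0 t, g s ≤ B * exp (b * s) * s ^ (q - 1)) :
    ∫ s in Ioc 0 t, g (t - s) * f s ≤ A * B * beta p q * exp (b * t) * t ^ (p + q - 1) := by
  have hts {s} (hs : s ∈ Ioo 0 t) : t - s ∈ Ioo 0 t := ⟨by linarith [hs.2], by linarith [hs.1]⟩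
  have hle : ∀ s ∈ Ioo 0 t, g (t - s) * f s ≤
      A * B * exp (b * t) * (s ^ (p - 1) * (t - s) ^ (q - 1)) := fun s hs => calc
    g (t - s) * f s ≤ (B * exp (b * (t - s)) * (t - s) ^ (q - 1)) *
        (A * exp (b * s) * s ^ (p - 1)) :=
      mul_le_mul (hg _ (hts hs)) (hf s hs) (hf0 s hs) ((hg0 _ (hts hs)).trans (hg _ (hts hs)))
    _ = A * B * exp (b * t) * (s ^ (p - 1) * (t - s) ^ (q - 1)) := by
      rw [show b * t = b * (t - s) + b * s by ring, exp_add]; ring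
  calc ∫ s in Ioc 0 t, g (t - s) * f s
      = ∫ s in Ioo 0 t, g (t - s) * f s := integral_Ioc_eq_integral_Ioo
    _ ≤ ∫ s in Ioo 0 t, A * B * exp (b * t) * (s ^ (p - 1) * (t - s) ^ (q - 1)) :=
      setIntegral_mono_of_nonneg (fun s hs => mul_nonneg (hg0 _ (hts hs)) (hf0 s hs)) hle
        (((integrableOn_rpow_mul_sub_rpow hp hq ht).mono_set Ioo_subset_Ioc_self).const_mul _)
    _ = A * B * exp (b * t) * ∫ s in Ioc 0 t, s ^ (p - 1) * (t - s) ^ (q - 1) := by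
      rw [integral_const_mul, integral_Ioc_eq_integral_Ioo]
    _ = A * B * beta p q * exp (b * t) * t ^ (p + q - 1) := by
      rw [setIntegral_rpow_mul_sub_rpow hp hq ht]; ring

theorem convPow_nonneg {K : ℝ → ℝ} (hK : ∀ t, 0 ≤ t → 0 ≤ K t) (n : ℕ) {t : ℝ} (ht : 0 ≤ t) :
    0 ≤ convPow K n t := by
  induction n generalizing t with
  | zero => exact hK t ht
  | succ n ih =>
    exact setIntegral_nonneg measurableSet_Ioc fun s hs =>
      mul_nonneg (hK _ (sub_nonneg.2 hs.2)) (ih hs.1.le)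

theorem convPow_le_exp_mul_rpow {K : ℝ → ℝ} {a b C : ℝ} (ha : 0 < a)
    (hK : ∀ t, 0 ≤ t → 0 ≤ K t)
    (hKle : ∀ t, 0 < t → K t ≤ C * exp (b * t) * t ^ (a - 1)) (n : ℕ) {t : ℝ} (ht : 0 < t) :
    convPow K n t ≤
      (C * Gamma a) ^ (n + 1) / Gamma (a * ↑(n + 1)) * exp (b * t) * t ^ (a * ↑(n + 1) - 1) := by
  induction n generalizing t with
  | zero =>
    have : Gamma a ≠ 0 := (Gamma_pos_of_pos ha).ne'
    simpa [convPow, this] using hKle t ht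
  | succ n ih =>
    have hp : 0 < a * ↑(n + 1) := by positivity
    calc convPow K (n + 1) t
        ≤ (C * Gamma a) ^ (n + 1) / Gamma (a * ↑(n + 1)) * C * beta (a * ↑(n + 1)) a *
            exp (b * t) * t ^ (a * ↑(n + 1) + a - 1) :=
          setIntegral_mul_le_of_le_exp_mul_rpow hp ha ht
            (fun s hs => convPow_nonneg hK n hs.1.le) (fun s hs => hK s hs.1.le)
            (fun s hs => ih hs.1) (fun s hs => hKle s hs.1)
      _ = _ := by
        have hsum : a * ↑(n + 1) + a = a * ↑(n + 1 + 1) := by push_cast; ring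
        have := (Gamma_pos_of_pos hp).ne'
        rw [beta, hsum]
        field_simp
        ring

theorem convPow_one_conv_bound_general
    (K : ℝ → ℝ) (a b C : ℝ) (ha : 0 < a) (hb : 0 < b)
    (hK0 : ∀ t, 0 ≤ t → 0 ≤ K t)
    (hKbound : ∀ t, 0 < t → K t ≤ C * exp (b * t) * t ^ (a - 1)) :
    ∀ n : ℕ, 1 ≤ n → ∀ t : ℝ, 0 ≤ t →
      (∫ s in Ioc (0 : ℝ) t, convPow K (n - 1) s) ≤
        C ^ n * exp (b * t) * (Gamma a) ^ n * t ^ (a * n) / Gamma (a * n + 1) := by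
  intro n hn t ht
  obtain ⟨m, rfl⟩ := Nat.exists_eq_add_of_le' hn
  have hp : 0 < a * ↑(m + 1) := by positivity
  rcases ht.eq_or_lt with rfl | ht_pos
  · push_cast at hp ⊢
    simp [zero_rpow hp.ne']
  calc ∫ s in Ioc 0 t, convPow K (m + 1 - 1) s
      = ∫ s in Ioc 0 t, (fun _ => (1 : ℝ)) (t - s) * convPow K m s := by simp
    _ ≤ (C * Gamma a) ^ (m + 1) / Gamma (a * ↑(m + 1)) * 1 * beta (a * ↑(m + 1)) 1 *
          exp (b * t) * t ^ (a * ↑(m + 1) + 1 - 1) :=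
        setIntegral_mul_le_of_le_exp_mul_rpow hp one_pos ht_pos
          (fun s hs => convPow_nonneg hK0 m hs.1.le) (fun _ _ => zero_le_one)
          (fun s hs => convPow_le_exp_mul_rpow ha hK0 hKbound m hs.1)
          (fun s hs => by simpa using one_le_exp (mul_nonneg hb.le hs.1.le))
    _ = _ := by
      have := (Gamma_pos_of_pos hp).ne'
      rw [beta, Gamma_one, Gamma_add_one hp.ne', add_sub_cancel_right, mul_pow]
      field_simp

/-- If `0 ≤ K(t) ≤ C e^{bt} t^{a-1}`, then
`(𝟏 * K^{*n})(t) ≤ C^n e^{bt} Γ(a)^n t^{an} / Γ(an+1)` for every `n ≥ 1`. -/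
theorem convPow_one_conv_bound
    (K : ℝ → ℝ) (a b C : ℝ) (ha : 0 < a) (hb : 0 < b) (hC : 0 < C)
    (hK0 : ∀ t, 0 ≤ t → 0 ≤ K t)
    (hKbound : ∀ t, 0 < t → K t ≤ C * exp (b * t) * t ^ (a - 1)) :
    ∀ n : ℕ, 1 ≤ n → ∀ t : ℝ, 0 ≤ t →
      (∫ s in Ioc (0 : ℝ) t, convPow K (n - 1) s) ≤
        C ^ n * exp (b * t) * (Gamma a) ^ n * t ^ (a * n) / Gamma (a * n + 1) :=
  convPow_one_conv_bound_general K a b C ha hb hK0 hKbound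
end

section
/- Let λ > 0 and c ∈ (0, 1/κ) for some κ > 0, let f_λ ∈ L²(ℝ_+) be nonnegative with ∫_0^∞ f_λ² du > 0, let ς² be a bounded nonnegative function, and suppose φ_∞ : ℝ_+ → [0,1] is continuous and satisfies φ_∞(t) = Ξ(t)² + (ρ/(λ²c)) ∫_0^t f_λ(t-s)² ς(s)² φ_∞(s) ds with ρ = cκ < 1, where Ξ = φ - f_λ*φ ∈ L²(ℝ_+) and f_λ² * ς² = cλ²(1 - Ξ²). If additionally κ‖ς²‖_∞ ∫_0^∞ f_λ(u)² du < λ², then φ_∞ is integrable and ∫_0^∞ φ_∞(s) ds ≤ λ²/(λ² - κ‖ς²‖_∞ ∫_0^∞ f_λ(u)² du) · ∫_0^∞ Ξ(t)² dt. -/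
/-!
Write `L(T) = ∫_0^T φ_∞`. Integrating the functional equation over `(0, T]` and exchanging the
order of integration, every translate `t ↦ f_λ(t - s)²` has integral at most `A = ∫_0^∞ f_λ²`,
so `L(T) ≤ ∫_0^∞ Ξ² + (κ/λ²) M A L(T)`. Since `L(T)` is finite and `(κ/λ²) M A < 1`, this
gives `L(T) ≤ λ²/(λ² - κ M A) ∫_0^∞ Ξ²` uniformly in `T`, and monotone convergence lets
`T → ∞`. Lower Lebesgue integrals are used throughout so that Tonelli applies without any
integrability bookkeeping for the inner convolution integral.
-/

open MeasureTheory Set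
open scoped ENNReal

theorem ofReal_integral_le_lintegral_ofReal {α : Type*} [MeasurableSpace α] {μ : Measure α}
    (f : α → ℝ) : ENNReal.ofReal (∫ x, f x ∂μ) ≤ ∫⁻ x, ENNReal.ofReal (f x) ∂μ := by
  by_cases hf : Integrable f μ
  · rw [integral_eq_lintegral_pos_part_sub_lintegral_neg_part hf]
    exact (ENNReal.ofReal_le_ofReal (sub_le_self _ ENNReal.toReal_nonneg)).trans
      ENNReal.ofReal_toReal_le
  · simp [integral_undef hf]

theorem lintegral_Ioc_volterra_le {k h : ℝ → ℝ≥0∞} (hk : Measurable k) (hh : Measurable h)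
    (a T : ℝ) :
    ∫⁻ t in Ioc a T, ∫⁻ s in Ioc a t, k (t - s) * h s ≤
      (∫⁻ u in Ici 0, k u) * ∫⁻ s in Ioc a T, h s := by
  -- extending `k` by zero on `(-∞, 0)` lets the inner integral run over all of `(a, T]`
  set K := (Ici (0 : ℝ)).indicator k
  have hK : Measurable K := hk.indicator measurableSet_Ici
  calc ∫⁻ t in Ioc a T, ∫⁻ s in Ioc a t, k (t - s) * h s
      ≤ ∫⁻ t in Ioc a T, ∫⁻ s in Ioc a T, K (t - s) * h s := by
        refine setLIntegral_mono' measurableSet_Ioc fun t ht => ?_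
        calc ∫⁻ s in Ioc a t, k (t - s) * h s = ∫⁻ s in Ioc a t, K (t - s) * h s :=
              setLIntegral_congr_fun measurableSet_Ioc fun s hs => by
                rw [show K (t - s) = k (t - s) from indicator_of_mem (sub_nonneg.2 hs.2) k]
          _ ≤ _ := lintegral_mono_set (Ioc_subset_Ioc_right ht.2)
    _ ≤ ∫⁻ t, ∫⁻ s in Ioc a T, K (t - s) * h s := setLIntegral_le_lintegral _ _
    _ = ∫⁻ s in Ioc a T, ∫⁻ t, K (t - s) * h s :=
        lintegral_lintegral_swap (by fun_prop)
    _ = ∫⁻ s in Ioc a T, (∫⁻ u in Ici 0, k u) * h s := by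
        refine lintegral_congr fun s => ?_
        rw [lintegral_mul_const (f := fun t => K (t - s)) _ (hK.comp (measurable_sub_const s)),
          lintegral_sub_right_eq_self K s, lintegral_indicator measurableSet_Ici]
    _ = _ := lintegral_const_mul _ hh

theorem setLIntegral_Ioi_le_of_forall_Ioc_le {f : ℝ → ℝ≥0∞} {a : ℝ} {C : ℝ≥0∞}
    (h : ∀ T, ∫⁻ x in Ioc a T, f x ≤ C) : ∫⁻ x in Ioi a, f x ≤ C := by
  have hcover : ⋃ n : ℕ, Ioc a n = Ioi a :=
    iUnion_Ioc_eq_Ioi_self_iff.2 fun x _ => exists_nat_ge x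
  rw [← hcover, setLIntegral_iUnion_of_directed _
    (Monotone.directed_le fun m n hmn => Ioc_subset_Ioc_right (Nat.cast_le.2 hmn))]
  exact iSup_le fun n => h n

theorem integrable_and_integral_le_of_lintegral_ofReal_le {α : Type*} [MeasurableSpace α]
    {μ : Measure α} {f : α → ℝ} {C : ℝ} (hf : AEStronglyMeasurable f μ) (hf0 : 0 ≤ᵐ[μ] f)
    (hC : 0 ≤ C) (h : ∫⁻ x, ENNReal.ofReal (f x) ∂μ ≤ ENNReal.ofReal C) :
    Integrable f μ ∧ ∫ x, f x ∂μ ≤ C := by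
  refine ⟨⟨hf, (hasFiniteIntegral_iff_ofReal hf0).2 (h.trans_lt ENNReal.ofReal_lt_top)⟩, ?_⟩
  rw [integral_eq_lintegral_of_nonneg_ae hf0 hf]
  exact ENNReal.toReal_le_of_le_ofReal hC h

theorem ENNReal.le_ofReal_div_of_le_add_mul {L : ℝ≥0∞} {a q : ℝ} (hL : L ≠ ⊤) (ha : 0 ≤ a)
    (hq0 : 0 ≤ q) (hq : q < 1) (h : L ≤ ENNReal.ofReal a + ENNReal.ofReal q * L) :
    L ≤ ENNReal.ofReal (a / (1 - q)) := by
  rw [← ENNReal.ofReal_toReal hL] at h ⊢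
  have hℓ := ENNReal.toReal_nonneg (a := L)
  rw [← ENNReal.ofReal_mul hq0, ← ENNReal.ofReal_add ha (by positivity),
    ENNReal.ofReal_le_ofReal_iff (by positivity)] at h
  refine ENNReal.ofReal_le_ofReal ?_
  rw [le_div_iff₀ (by linarith)]
  linarith

theorem setLIntegral_Ioc_le_of_volterra_eq {K w g φ : ℝ → ℝ} {k M : ℝ}
    (hK : Measurable K) (hK0 : ∀ u, 0 ≤ K u) (hKi : IntegrableOn K (Ioi 0))
    (hw : Measurable w) (hw0 : ∀ s, 0 ≤ w s) (hwM : ∀ s, w s ≤ M)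
    (hg : IntegrableOn g (Ioi 0)) (hg0 : ∀ t, 0 ≤ g t)
    (hφ : Measurable φ) (hφ0 : ∀ t, 0 < t → 0 ≤ φ t) (hk : 0 ≤ k)
    (heq : ∀ t, 0 < t → φ t = g t + k * ∫ s in Ioc 0 t, K (t - s) * w s * φ s) (T : ℝ) :
    ∫⁻ t in Ioc 0 T, ENNReal.ofReal (φ t) ≤
      ENNReal.ofReal (∫ t in Ioi 0, g t) +
        ENNReal.ofReal (k * M * ∫ u in Ioi 0, K u) * ∫⁻ t in Ioc 0 T, ENNReal.ofReal (φ t) := by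
  have hM : 0 ≤ M := (hw0 0).trans (hwM 0)
  have hKint : ∫⁻ u in Ici 0, ENNReal.ofReal (K u) = ENNReal.ofReal (∫ u in Ioi 0, K u) := by
    rw [← setLIntegral_congr Ioi_ae_eq_Ici,
      ofReal_integral_eq_lintegral_ofReal hKi (ae_of_all _ hK0)]
  have hgint : ∫⁻ t in Ioc 0 T, ENNReal.ofReal (g t) ≤ ENNReal.ofReal (∫ t in Ioi 0, g t) := by
    rw [ofReal_integral_eq_lintegral_ofReal hg (ae_of_all _ hg0)]
    exact lintegral_mono_set Ioc_subset_Ioi_self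
  have hweight : ∫⁻ s in Ioc 0 T, ENNReal.ofReal (w s * φ s) ≤
      ENNReal.ofReal M * ∫⁻ t in Ioc 0 T, ENNReal.ofReal (φ t) := by
    rw [← lintegral_const_mul' _ _ ENNReal.ofReal_ne_top]
    refine setLIntegral_mono' measurableSet_Ioc fun s hs => ?_
    rw [← ENNReal.ofReal_mul hM]
    exact ENNReal.ofReal_le_ofReal (mul_le_mul_of_nonneg_right (hwM s) (hφ0 s hs.1))
  have hinner : ∀ t, ENNReal.ofReal (k * ∫ s in Ioc 0 t, K (t - s) * w s * φ s) ≤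
      ENNReal.ofReal k *
        ∫⁻ s in Ioc 0 t, ENNReal.ofReal (K (t - s)) * ENNReal.ofReal (w s * φ s) := by
    intro t
    rw [ENNReal.ofReal_mul hk]
    gcongr
    refine (ofReal_integral_le_lintegral_ofReal _).trans_eq (lintegral_congr fun s => ?_)
    rw [mul_assoc, ENNReal.ofReal_mul (hK0 _)]
  calc ∫⁻ t in Ioc 0 T, ENNReal.ofReal (φ t)
      = ∫⁻ t in Ioc 0 T, ENNReal.ofReal (g t + k * ∫ s in Ioc 0 t, K (t - s) * w s * φ s) :=
        setLIntegral_congr_fun measurableSet_Ioc fun t ht => by rw [← heq t ht.1]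
    _ ≤ ∫⁻ t in Ioc 0 T, (ENNReal.ofReal (g t) + ENNReal.ofReal k *
          ∫⁻ s in Ioc 0 t, ENNReal.ofReal (K (t - s)) * ENNReal.ofReal (w s * φ s)) :=
        lintegral_mono fun t => ENNReal.ofReal_add_le.trans (add_le_add_right (hinner t) _)
    _ = (∫⁻ t in Ioc 0 T, ENNReal.ofReal (g t)) + ENNReal.ofReal k *
          ∫⁻ t in Ioc 0 T, ∫⁻ s in Ioc 0 t,
            ENNReal.ofReal (K (t - s)) * ENNReal.ofReal (w s * φ s) := by
        rw [lintegral_add_left' ((hg.mono_set Ioc_subset_Ioi_self).aemeasurable.ennreal_ofReal),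
          lintegral_const_mul' _ _ ENNReal.ofReal_ne_top]
    _ ≤ ENNReal.ofReal (∫ t in Ioi 0, g t) + ENNReal.ofReal k *
          (ENNReal.ofReal (∫ u in Ioi 0, K u) *
            (ENNReal.ofReal M * ∫⁻ t in Ioc 0 T, ENNReal.ofReal (φ t))) := by
        grw [hgint, lintegral_Ioc_volterra_le (k := fun u => ENNReal.ofReal (K u))
          (h := fun s => ENNReal.ofReal (w s * φ s)) (by fun_prop) (by fun_prop), hKint, hweight]
    _ = _ := by
        rw [ENNReal.ofReal_mul (by positivity), ENNReal.ofReal_mul hk]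
        ring

theorem contraction_function_integrable_general
    (lam c κ M : ℝ) (hlam : 0 < lam) (hκ : 0 < κ)
    (hc : c ∈ Ioo (0 : ℝ) (1 / κ))
    (fl ς Ξ phiInf : ℝ → ℝ)
    (hflm : Measurable fl)
    (hflL2 : IntegrableOn (fun u => fl u ^ 2) (Ioi (0 : ℝ)))
    (hςm : Measurable ς) (hςbd : ∀ t, ς t ^ 2 ≤ M)
    (hΞL2 : IntegrableOn (fun t => Ξ t ^ 2) (Ioi (0 : ℝ)))
    (hφcont : Continuous phiInf) (hφrange : ∀ t, 0 ≤ t → phiInf t ∈ Icc (0 : ℝ) 1)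
    (hfunc : ∀ t : ℝ, 0 ≤ t →
      phiInf t = Ξ t ^ 2 + (c * κ) / (lam ^ 2 * c) *
        ∫ s in Ioc (0 : ℝ) t, fl (t - s) ^ 2 * ς s ^ 2 * phiInf s)
    (hsmall : κ * M * (∫ u in Ioi (0 : ℝ), fl u ^ 2) < lam ^ 2) :
    IntegrableOn phiInf (Ioi (0 : ℝ)) ∧
      (∫ s in Ioi (0 : ℝ), phiInf s) ≤
        lam ^ 2 / (lam ^ 2 - κ * M * ∫ u in Ioi (0 : ℝ), fl u ^ 2) *
          ∫ t in Ioi (0 : ℝ), Ξ t ^ 2 := by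
  set A := ∫ u in Ioi (0 : ℝ), fl u ^ 2
  set X := ∫ t in Ioi (0 : ℝ), Ξ t ^ 2
  have hX : 0 ≤ X := setIntegral_nonneg measurableSet_Ioi fun t _ => sq_nonneg _
  have hM : 0 ≤ M := (sq_nonneg _).trans (hςbd 0)
  have hlam2 : 0 < lam ^ 2 := by positivity
  have hq : κ / lam ^ 2 * M * A < 1 := by
    rw [mul_assoc, div_mul_eq_mul_div, div_lt_one hlam2, ← mul_assoc]
    exact hsmall
  have hφ0 : ∀ t, 0 < t → 0 ≤ phiInf t := fun t ht => (hφrange t ht.le).1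
  have hcoef : c * κ / (lam ^ 2 * c) = κ / lam ^ 2 := by
    rw [mul_comm c κ, mul_div_mul_right _ _ hc.1.ne']
  have hbound : ∀ T, ∫⁻ t in Ioc 0 T, ENNReal.ofReal (phiInf t) ≤
      ENNReal.ofReal (lam ^ 2 / (lam ^ 2 - κ * M * A) * X) := by
    intro T
    have hrenewal := setLIntegral_Ioc_le_of_volterra_eq (K := fun u => fl u ^ 2)
      (w := fun s => ς s ^ 2) (k := κ / lam ^ 2) (by fun_prop) (fun u => sq_nonneg _) hflL2
      (by fun_prop) (fun s => sq_nonneg _) hςbd hΞL2 (fun t => sq_nonneg _) hφcont.measurable hφ0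
      (by positivity) (fun t ht => by rw [hfunc t ht.le, hcoef]) T
    convert ENNReal.le_ofReal_div_of_le_add_mul hφcont.integrableOn_Ioc.lintegral_lt_top.ne hX
      (by positivity) hq hrenewal using 2
    field_simp
  exact integrable_and_integral_le_of_lintegral_ofReal_le hφcont.aestronglyMeasurable
    ((ae_restrict_iff' measurableSet_Ioi).2 (ae_of_all _ hφ0)) (by positivity)
    (setLIntegral_Ioi_le_of_forall_Ioc_le hbound)

/-- Integrability of the contraction function `φ_∞` of the stabilized affine
Volterra equation: if `φ_∞` solves
`φ_∞(t) = Ξ(t)² + (ρ/(λ²c)) ∫_0^t f_λ(t-s)² ς(s)² φ_∞(s) ds` with `ρ = cκ < 1`,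
the stabilizer identity `f_λ² * ς² = cλ²(1-Ξ²)` holds, `Ξ ∈ L²(ℝ₊)`, and
`κ‖ς²‖_∞ ∫_0^∞ f_λ² < λ²`, then `φ_∞` is integrable with
`∫_0^∞ φ_∞ ≤ λ²/(λ² - κ‖ς²‖_∞ ∫_0^∞ f_λ²) · ∫_0^∞ Ξ²`. -/
theorem contraction_function_integrable
    (lam c κ M : ℝ) (hlam : 0 < lam) (hκ : 0 < κ)
    (hc : c ∈ Ioo (0 : ℝ) (1 / κ))
    (fl ς Ξ phiInf : ℝ → ℝ)
    (hflm : Measurable fl) (hfl0 : ∀ t, 0 < t → 0 ≤ fl t)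
    (hflL2 : IntegrableOn (fun u => fl u ^ 2) (Ioi (0 : ℝ)))
    (hflpos : 0 < ∫ u in Ioi (0 : ℝ), fl u ^ 2)
    (hςm : Measurable ς) (hς0 : ∀ t, 0 ≤ ς t ^ 2) (hςbd : ∀ t, ς t ^ 2 ≤ M)
    (hΞL2 : IntegrableOn (fun t => Ξ t ^ 2) (Ioi (0 : ℝ)))
    (hφcont : Continuous phiInf) (hφrange : ∀ t, 0 ≤ t → phiInf t ∈ Icc (0 : ℝ) 1)
    (hstab : ∀ t : ℝ, 0 ≤ t →
      (∫ s in Ioc (0 : ℝ) t, fl (t - s) ^ 2 * ς s ^ 2) =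
        c * lam ^ 2 * (1 - Ξ t ^ 2))
    (hfunc : ∀ t : ℝ, 0 ≤ t →
      phiInf t = Ξ t ^ 2 + (c * κ) / (lam ^ 2 * c) *
        ∫ s in Ioc (0 : ℝ) t, fl (t - s) ^ 2 * ς s ^ 2 * phiInf s)
    (hsmall : κ * M * (∫ u in Ioi (0 : ℝ), fl u ^ 2) < lam ^ 2) :
    IntegrableOn phiInf (Ioi (0 : ℝ)) ∧
      (∫ s in Ioi (0 : ℝ), phiInf s) ≤
        lam ^ 2 / (lam ^ 2 - κ * M * ∫ u in Ioi (0 : ℝ), fl u ^ 2) *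
          ∫ t in Ioi (0 : ℝ), Ξ t ^ 2 :=
  contraction_function_integrable_general lam c κ M hlam hκ hc fl ς Ξ phiInf hflm hflL2 hςm hςbd
    hΞL2 hφcont hφrange hfunc hsmall
end
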